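/- Let n ≥ 2 and m ≥ 2 be integers and consider the lexicographic product P_n∘P_m of paths. Then γ_{t[1,2]}(P_n∘P_m) = 2⌈n/4⌉; moreover γ_{[1,2]}(P_n∘P_m) = ⌈n/3⌉ if m ∈ {2,3}, and γ_{[1,2]}(P_n∘P_m) = 2⌈n/4⌉ if m > 3. -/

import Mathlib

open SimpleGraph

/-- The lexicographic product of two simple graphs. -/
def SimpleGraph.lexProd {V W : Type*} (G : SimpleGraph V) (H : SimpleGraph W) :
    SimpleGraph (V × W) where
  Adj p q := G.Adj p.1 q.1 ∨ (p.1 = q.1 ∧ H.Adj p.2 q.2)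
  symm := by
    constructor
    rintro p q (h | ⟨e, h⟩)
    · exact Or.inl h.symm
    · exact Or.inr ⟨e.symm, h.symm⟩
  loopless := by
    constructor
    rintro p (h | ⟨_, h⟩)
    · exact G.loopless.irrefl _ h
    · exact H.loopless.irrefl _ h

/-- The `H`-layer of the product over a vertex `v` of `G`: all pairs with first
coordinate `v`. -/
def layer {V W : Type*} (v : V) : Set (V × W) := {p | p.1 = v}

/-- `S` is a `[1,k]`-set of `G`: every vertex outside `S` has at least `1` and at
most `k` neighbors in `S`. -/
def IsOneK {V : Type*} (G : SimpleGraph V) (k : ℕ) (S : Set V) : Prop :=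
  ∀ v ∉ S, 1 ≤ (G.neighborSet v ∩ S).ncard ∧ (G.neighborSet v ∩ S).ncard ≤ k

/-- `S` is a total `[1,k]`-set of `G`: every vertex has at least `1` and at most `k`
neighbors in `S`. -/
def IsTotalOneK {V : Type*} (G : SimpleGraph V) (k : ℕ) (S : Set V) : Prop :=
  ∀ v, 1 ≤ (G.neighborSet v ∩ S).ncard ∧ (G.neighborSet v ∩ S).ncard ≤ k

/-- `S` is an independent `[1,k]`-set of `G`. -/
def IsIndepOneK {V : Type*} (G : SimpleGraph V) (k : ℕ) (S : Set V) : Prop :=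
  IsOneK G k S ∧ ∀ v ∈ S, ∀ w ∈ S, ¬ G.Adj v w

/-- `S` is `j`-dependent: every vertex of `S` has at most `j` neighbors in `S`. -/
def IsJDep {V : Type*} (G : SimpleGraph V) (j : ℕ) (S : Set V) : Prop :=
  ∀ v ∈ S, (G.neighborSet v ∩ S).ncard ≤ j

/-- `S` is an efficient dominating set of `G`. -/
def IsEffDom {V : Type*} (G : SimpleGraph V) (S : Set V) : Prop :=
  (∀ v ∉ S, (G.neighborSet v ∩ S).ncard = 1) ∧ ∀ v ∈ S, (G.neighborSet v ∩ S).ncard = 0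

/-- Membership in `SD^j_{[1,k]}(G)`: a `j`-dependent `[1,k]`-set such that every
vertex of `S` with no neighbor in `S` is at distance at least `3` from every other
vertex of `S`. -/
def InSD {V : Type*} (G : SimpleGraph V) (k j : ℕ) (S : Set V) : Prop :=
  IsOneK G k S ∧ IsJDep G j S ∧
    ∀ v ∈ S, (G.neighborSet v ∩ S).ncard = 0 → ∀ v' ∈ S, v' ≠ v → 3 ≤ G.dist v v'

/-- The `[1,k]`-domination number `γ_{[1,k]}`. -/
noncomputable def gammaOneK {V : Type*} (G : SimpleGraph V) (k : ℕ) : ℕ :=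
  sInf {n | ∃ S : Set V, IsOneK G k S ∧ S.ncard = n}

/-- The total `[1,k]`-domination number `γ_{t[1,k]}`. -/
noncomputable def gammaTotalOneK {V : Type*} (G : SimpleGraph V) (k : ℕ) : ℕ :=
  sInf {n | ∃ S : Set V, IsTotalOneK G k S ∧ S.ncard = n}

/-- The `[1,k]`-independence number `γ_{i[1,k]}`. -/
noncomputable def gammaIndepOneK {V : Type*} (G : SimpleGraph V) (k : ℕ) : ℕ :=
  sInf {n | ∃ S : Set V, IsIndepOneK G k S ∧ S.ncard = n}

/-- `D` is a dominating set of `G`. -/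
def IsDomSet {V : Type*} (G : SimpleGraph V) (D : Set V) : Prop :=
  ∀ v ∉ D, ∃ u ∈ D, G.Adj v u

/-- `D` is a total dominating set of `G`. -/
def IsTotalDomSet {V : Type*} (G : SimpleGraph V) (D : Set V) : Prop :=
  ∀ v, ∃ u ∈ D, G.Adj v u

/-- The domination number `γ`. -/
noncomputable def gammaDom {V : Type*} (G : SimpleGraph V) : ℕ :=
  sInf {n | ∃ D : Set V, IsDomSet G D ∧ D.ncard = n}

/-- The total domination number `γ_t`. -/
noncomputable def gammaTotalDom {V : Type*} (G : SimpleGraph V) : ℕ :=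
  sInf {n | ∃ D : Set V, IsTotalDomSet G D ∧ D.ncard = n}
/-!
Write `a k` for the number of elements of `S` in column `k` of `P_n ∘ P_m`. A vertex `(x, y)`
sees `a (x - 1) + a (x + 1)` elements of `S` in the neighbouring columns and, in its own column,
its `P_m`-neighbours that lie in `S`. For a `[1,2]`-set this forces `a (k-1) + a k + a (k+1) ≥ 1`,
so some nonzero column lies within distance one of every column: at least `⌈n/3⌉` columns are
nonzero. For a total `[1,2]`-set, or a `[1,2]`-set with `m ≥ 4` and no full column, two more
facts hold: next to a nonzero column the two neighbouring columns carry at most one element of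
`S` in total (look at a vertex of the column adjacent to an element of `S`), and a column with
empty neighbouring columns must (totally) dominate `P_m`, hence holds at least two elements.
So the nonzero columns form runs of length at most two and weight at least two, separated by
at most two empty columns, and there are at least `⌈n/4⌉` runs. A full column forces `S` to be
everything once `m ≥ 3`. The bounds are attained by sets inside one row, over suitable periodic
patterns of columns.
-/

open Finset Function

lemma SimpleGraph.Preconnected.exists_adj_mem_not_mem {V : Type*} {G : SimpleGraph V}
    (hG : G.Preconnected) {s : Set V} {u v : V} (hu : u ∈ s) (hv : v ∉ s) :
    ∃ x ∈ s, ∃ y ∉ s, G.Adj x y := by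
  obtain ⟨p⟩ := hG u v
  obtain ⟨d, -, hd₁, hd₂⟩ := p.exists_boundary_dart s hu hv
  exact ⟨_, hd₁, _, hd₂, d.adj⟩

lemma IsTotalDomSet.two_le_ncard {V : Type*} [Finite V] [Nonempty V] {G : SimpleGraph V}
    {D : Set V} (hD : IsTotalDomSet G D) : 2 ≤ D.ncard := by
  by_contra! h
  obtain ⟨u, hu⟩ :=
    (Set.ncard_le_one_iff_subset_singleton (Set.toFinite _)).1 (Nat.le_of_lt_succ h)
  obtain ⟨w, hw, hadj⟩ := hD u
  rw [hu hw] at hadj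
  exact hadj.ne rfl

lemma two_le_ncard_of_isDomSet_pathGraph {m : ℕ} (hm : 4 ≤ m) {D : Set (Fin m)}
    (hD : IsDomSet (pathGraph m) D) : 2 ≤ D.ncard := by
  have : Nonempty (Fin m) := ⟨⟨0, by omega⟩⟩
  by_contra! h
  obtain ⟨u, hu⟩ :=
    (Set.ncard_le_one_iff_subset_singleton (Set.toFinite _)).1 (Nat.le_of_lt_succ h)
  let v : Fin m := ⟨if (u : ℕ) < 2 then u + 2 else u - 2, by split_ifs <;> omega⟩
  have hv : v ∉ D := fun hv => by
    have := congrArg Fin.val (hu hv)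
    simp only [v] at this
    split_ifs at this <;> omega
  obtain ⟨w, hw, hadj⟩ := hD v hv
  rw [hu hw, pathGraph_adj] at hadj
  simp only [v] at hadj
  split_ifs at hadj <;> omega

lemma IsTotalOneK.isOneK {V : Type*} {G : SimpleGraph V} {k : ℕ} {S : Set V}
    (hS : IsTotalOneK G k S) : IsOneK G k S := fun v _ => hS v

lemma sInf_ncard_eq {α : Type*} {P : Set α → Prop} {b : ℕ} (hex : ∃ S, P S ∧ S.ncard = b)
    (hle : ∀ S, P S → b ≤ S.ncard) : sInf {k | ∃ S, P S ∧ S.ncard = k} = b :=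
  le_antisymm (Nat.sInf_le hex) (le_csInf ⟨b, hex⟩ fun _ ⟨S, hS, hk⟩ => hk ▸ hle S hS)

section ColumnSequences

variable {a : ℤ → ℕ} {n : ℕ}

lemma le_mul_card_of_cover {T : Finset ℤ} (l r : ℕ)
    (h : ∀ k : ℤ, 0 ≤ k → k < n → ∃ s ∈ T, s - l ≤ k ∧ k ≤ s + r) :
    n ≤ (l + r + 1) * #T := by
  calc n = #(Ico (0 : ℤ) n) := by simp
    _ ≤ #(T.biUnion fun s => Icc (s - l) (s + r)) := card_le_card fun k hk => by
        obtain ⟨s, hs, hl, hr⟩ := h k (mem_Ico.1 hk).1 (mem_Ico.1 hk).2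
        exact mem_biUnion.2 ⟨s, hs, mem_Icc.2 ⟨hl, hr⟩⟩
    _ ≤ ∑ s ∈ T, #(Icc (s - l) (s + r)) := card_biUnion_le
    _ = ∑ s ∈ T, (l + r + 1) := sum_congr rfl fun s _ => by rw [Int.card_Icc]; omega
    _ = (l + r + 1) * #T := by rw [sum_const, smul_eq_mul, mul_comm]

lemma div_three_le_sum (ha : support a ⊆ Set.Ico 0 n)
    (hdom : ∀ k : ℤ, 0 ≤ k → k < n → a (k - 1) + a k + a (k + 1) ≠ 0) :
    (n + 2) / 3 ≤ ∑ k ∈ Ico (0 : ℤ) n, a k := by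
  set T := {k ∈ Ico (0 : ℤ) n | a k ≠ 0}
  have memT : ∀ s, a s ≠ 0 → s ∈ T := fun s hs =>
    mem_filter.2 ⟨by simpa using ha hs, hs⟩
  have hcover : n ≤ (1 + 1 + 1) * #T := le_mul_card_of_cover 1 1 fun k hk0 hkn => by
    rcases (by have := hdom k hk0 hkn; omega : a (k - 1) ≠ 0 ∨ a k ≠ 0 ∨ a (k + 1) ≠ 0)
      with h | h | h
    exacts [⟨_, memT _ h, by omega, by omega⟩, ⟨_, memT _ h, by omega, by omega⟩,
      ⟨_, memT _ h, by omega, by omega⟩]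
  have hsum : #T ≤ ∑ k ∈ Ico (0 : ℤ) n, a k :=
    calc #T = ∑ k ∈ T, 1 := card_eq_sum_ones T
      _ ≤ ∑ k ∈ T, a k := sum_le_sum fun k hk => Nat.one_le_iff_ne_zero.2 (mem_filter.1 hk).2
      _ ≤ ∑ k ∈ Ico (0 : ℤ) n, a k := sum_le_sum_of_subset (filter_subset _ _)
  omega

lemma two_mul_div_four_le_sum (ha : support a ⊆ Set.Ico 0 n)
    (hsparse : ∀ k, a k ≠ 0 → a (k - 1) + a (k + 1) ≤ 1)
    (hisolated : ∀ k : ℤ, 0 ≤ k → k < n → a (k - 1) = 0 → a (k + 1) = 0 → 2 ≤ a k) :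
    2 * ((n + 3) / 4) ≤ ∑ k ∈ Ico (0 : ℤ) n, a k := by
  -- `T` is the set of first indices of the maximal runs of nonzero terms
  set T := {k ∈ Ico (0 : ℤ) n | a k ≠ 0 ∧ a (k - 1) = 0}
  have memT : ∀ s t, t + 1 = s → a s ≠ 0 → a t = 0 → s ∈ T := fun s t hst hs ht =>
    mem_filter.2 ⟨by simpa using ha hs, hs, by rwa [← hst, add_sub_cancel_right]⟩
  have hcover : n ≤ (1 + 2 + 1) * #T := le_mul_card_of_cover 1 2 fun k hk0 hkn => by
    have h1 : a (k - 1) ≠ 0 → a (k - 2) + a k ≤ 1 := by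
      have := hsparse (k - 1)
      rwa [show k - 1 - 1 = k - 2 by ring, sub_add_cancel] at this
    have h2 : a (k - 2) ≠ 0 → a (k - 3) + a (k - 1) ≤ 1 := by
      have := hsparse (k - 2)
      rwa [show k - 2 - 1 = k - 3 by ring, show k - 2 + 1 = k - 1 by ring] at this
    by_cases hk : a k = 0
    · by_cases hk' : a (k + 1) = 0
      · have hk1 : a (k - 1) ≠ 0 := fun h => by have := hisolated k hk0 hkn h hk'; omega
        by_cases hk2 : a (k - 2) = 0
        · exact ⟨k - 1, memT (k - 1) (k - 2) (by ring) hk1 hk2, by omega, by omega⟩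
        · exact ⟨k - 2, memT (k - 2) (k - 3) (by ring) hk2 (by omega), by omega, by omega⟩
      · exact ⟨k + 1, memT (k + 1) k rfl hk' hk, by omega, by omega⟩
    · by_cases hk1 : a (k - 1) = 0
      · exact ⟨k, memT k (k - 1) (by ring) hk hk1, by omega, by omega⟩
      · exact ⟨k - 1, memT (k - 1) (k - 2) (by ring) hk1 (by omega), by omega, by omega⟩
  have hdisj : Disjoint T (T.map (addRightEmbedding 1)) := by
    refine disjoint_left.2 fun s hs hs' => ?_
    obtain ⟨t, ht, rfl⟩ := mem_map.1 hs'
    have := (mem_filter.1 hs).2.2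
    simp only [addRightEmbedding_apply, add_sub_cancel_right] at this
    exact (mem_filter.1 ht).2.1 this
  have hsum : 2 * #T ≤ ∑ k ∈ Ico (0 : ℤ) n, a k :=
    calc 2 * #T = ∑ s ∈ T, 2 := by rw [sum_const, smul_eq_mul, mul_comm]
      _ ≤ ∑ s ∈ T, (a s + a (s + 1)) := sum_le_sum fun s hs => by
          obtain ⟨hs0, hs, hs'⟩ := (mem_filter.1 hs)
          have := hisolated s (mem_Ico.1 hs0).1 (mem_Ico.1 hs0).2 hs'
          omega
      _ = ∑ s ∈ T ∪ T.map (addRightEmbedding 1), a s := by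
          rw [sum_union hdisj, sum_map, sum_add_distrib]; rfl
      _ ≤ ∑ k ∈ Ico (0 : ℤ) n, a k :=
          sum_le_sum_of_ne_zero fun s _ hs => by simpa using ha hs
  omega

lemma card_filter_Ico_eq_of_succ {C : ℤ → Prop} [DecidablePred C] {n : ℕ} (f : ℕ → ℕ)
    (h0 : f 0 = 0) (hsucc : ∀ N < n, f (N + 1) = f N + if C N then 1 else 0) :
    #{k ∈ Ico (0 : ℤ) n | C k} = f n := by
  induction n with
  | zero => simp [h0]
  | succ n ih =>
    rw [Nat.cast_succ, Ico_add_one_right_eq_Icc, ← Ico_insert_right (by positivity),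
      filter_insert, hsucc n (by omega), ← ih fun N hN => hsucc N (by omega)]
    split_ifs <;> simp

end ColumnSequences

section PathLexProduct

variable {n m : ℕ}

-- Indexed by `ℤ` so that the columns `x - 1` and `x + 1` around a boundary column `x` need no
-- special treatment: they are simply empty.
noncomputable def colCount (S : Set (Fin n × Fin m)) (k : ℤ) : ℕ :=
  {p ∈ S | (p.1 : ℤ) = k}.ncard

lemma support_colCount (S : Set (Fin n × Fin m)) : support (colCount S) ⊆ Set.Ico 0 n := by
  intro k hk
  obtain ⟨p, -, rfl⟩ := Set.nonempty_of_ncard_ne_zero hk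
  simp

lemma colCount_coe (S : Set (Fin n × Fin m)) (x : Fin n) :
    colCount S x = (Prod.mk x ⁻¹' S).ncard := by
  have hcol : {p ∈ S | (p.1 : ℤ) = x} = Prod.mk x '' (Prod.mk x ⁻¹' S) := by
    ext ⟨x', y'⟩
    simp only [Set.mem_sep_iff, Set.mem_image, Set.mem_preimage, Prod.mk.injEq, Nat.cast_inj,
      Fin.val_inj]
    constructor
    · rintro ⟨hS, rfl⟩
      exact ⟨y', hS, rfl, rfl⟩
    · rintro ⟨z, hS, rfl, rfl⟩
      exact ⟨hS, rfl⟩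
  rw [colCount, hcol, Set.ncard_image_of_injective _ (Prod.mk_right_injective x)]

lemma sum_colCount (S : Set (Fin n × Fin m)) :
    ∑ k ∈ Ico (0 : ℤ) n, colCount S k = S.ncard := by
  classical
  rw [Set.ncard_eq_toFinset_card' S, card_eq_sum_card_fiberwise
    (f := fun p : Fin n × Fin m => (p.1 : ℤ)) (t := Ico 0 n) fun p _ => by simp]
  refine sum_congr rfl fun k _ => ?_
  rw [colCount, ← Set.ncard_coe_finset]
  congr 1
  ext
  simp

lemma ncard_neighborSet_inter (S : Set (Fin n × Fin m)) (x : Fin n) (y : Fin m) :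
    (((pathGraph n).lexProd (pathGraph m)).neighborSet (x, y) ∩ S).ncard =
      colCount S (x - 1) + colCount S (x + 1) +
        ((pathGraph m).neighborSet y ∩ Prod.mk x ⁻¹' S).ncard := by
  have hsplit : ((pathGraph n).lexProd (pathGraph m)).neighborSet (x, y) ∩ S =
      {p ∈ S | (p.1 : ℤ) = x - 1} ∪ {p ∈ S | (p.1 : ℤ) = x + 1} ∪
        Prod.mk x '' ((pathGraph m).neighborSet y ∩ Prod.mk x ⁻¹' S) := by
    ext ⟨x', y'⟩
    simp only [lexProd, pathGraph_adj, Set.mem_inter_iff, mem_neighborSet, Set.mem_union,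
      Set.mem_sep_iff, Set.mem_image, Set.mem_preimage, Prod.mk.injEq]
    constructor
    · rintro ⟨(h | h) | ⟨rfl, h⟩, hS⟩
      · exact Or.inl (Or.inr ⟨hS, by omega⟩)
      · exact Or.inl (Or.inl ⟨hS, by omega⟩)
      · exact Or.inr ⟨y', ⟨h, hS⟩, rfl, rfl⟩
    · rintro ((⟨hS, h⟩ | ⟨hS, h⟩) | ⟨z, ⟨h, hS⟩, rfl, rfl⟩)
      · exact ⟨Or.inl (Or.inr (by omega)), hS⟩
      · exact ⟨Or.inl (Or.inl (by omega)), hS⟩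
      · exact ⟨Or.inr ⟨rfl, h⟩, hS⟩
  rw [hsplit, Set.ncard_union_eq, Set.ncard_union_eq,
    Set.ncard_image_of_injective _ (Prod.mk_right_injective x)]
  · rfl
  · exact Set.disjoint_left.2 fun p h1 h2 => by have := h1.2; have := h2.2; omega
  · refine Set.disjoint_left.2 fun p h1 h2 => ?_
    obtain ⟨z, -, rfl⟩ := h2
    rcases h1 with ⟨-, h⟩ | ⟨-, h⟩ <;> dsimp only at h <;> omega

lemma exists_fin_coe_eq {k : ℤ} (h0 : 0 ≤ k) (hn : k < n) : ∃ x : Fin n, (x : ℤ) = k :=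
  ⟨⟨k.toNat, by omega⟩, by simp [h0]⟩

lemma colCount_sub_one_add_colCount_add_one_le_one {S : Set (Fin n × Fin m)} {x : Fin n}
    {y₀ y₁ : Fin m} (hy₀ : (x, y₀) ∈ S) (hadj : (pathGraph m).Adj y₁ y₀)
    (hle : (((pathGraph n).lexProd (pathGraph m)).neighborSet (x, y₁) ∩ S).ncard ≤ 2) :
    colCount S (x - 1) + colCount S (x + 1) ≤ 1 := by
  have hin : 1 ≤ ((pathGraph m).neighborSet y₁ ∩ Prod.mk x ⁻¹' S).ncard :=
    Nat.one_le_iff_ne_zero.2 (Set.ncard_ne_zero_of_mem (a := y₀) ⟨hadj, hy₀⟩)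
  rw [ncard_neighborSet_inter] at hle
  omega

lemma ncard_neighborSet_inter_of_colCount_eq_zero {S : Set (Fin n × Fin m)} {x : Fin n}
    (hpred : colCount S (x - 1) = 0) (hsucc : colCount S (x + 1) = 0) (y : Fin m) :
    (((pathGraph n).lexProd (pathGraph m)).neighborSet (x, y) ∩ S).ncard =
      ((pathGraph m).neighborSet y ∩ Prod.mk x ⁻¹' S).ncard := by
  rw [ncard_neighborSet_inter, hpred, hsucc, zero_add, zero_add]

lemma colCount_sub_one_add_colCount_add_colCount_add_one_ne_zero {S : Set (Fin n × Fin m)}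
    (hS : IsOneK ((pathGraph n).lexProd (pathGraph m)) 2 S) (x : Fin n) (y : Fin m) :
    colCount S (x - 1) + colCount S x + colCount S (x + 1) ≠ 0 := by
  intro h
  have hx : (Prod.mk x ⁻¹' S).ncard = 0 := by rw [← colCount_coe]; omega
  have hy : (x, y) ∉ S := fun hy =>
    Set.ncard_ne_zero_of_mem (s := Prod.mk x ⁻¹' S) hy (Set.toFinite _) hx
  have := (hS _ hy).1
  have := Set.ncard_inter_le_ncard_right ((pathGraph m).neighborSet y) (Prod.mk x ⁻¹' S)
  rw [ncard_neighborSet_inter] at *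
  omega


lemma isTotalDomSet_preimage_of_colCount_eq_zero {S : Set (Fin n × Fin m)}
    (hS : IsTotalOneK ((pathGraph n).lexProd (pathGraph m)) 2 S) {x : Fin n}
    (hpred : colCount S (x - 1) = 0) (hsucc : colCount S (x + 1) = 0) :
    IsTotalDomSet (pathGraph m) (Prod.mk x ⁻¹' S) := fun y => by
  have := (hS (x, y)).1
  rw [ncard_neighborSet_inter_of_colCount_eq_zero hpred hsucc] at this
  obtain ⟨z, hadj, hz⟩ := Set.nonempty_of_ncard_ne_zero
    (s := (pathGraph m).neighborSet y ∩ Prod.mk x ⁻¹' S) (by omega)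
  exact ⟨z, hz, hadj⟩

lemma isDomSet_preimage_of_colCount_eq_zero {S : Set (Fin n × Fin m)}
    (hS : IsOneK ((pathGraph n).lexProd (pathGraph m)) 2 S) {x : Fin n}
    (hpred : colCount S (x - 1) = 0) (hsucc : colCount S (x + 1) = 0) :
    IsDomSet (pathGraph m) (Prod.mk x ⁻¹' S) := fun y hy => by
  have := (hS (x, y) hy).1
  rw [ncard_neighborSet_inter_of_colCount_eq_zero hpred hsucc] at this
  obtain ⟨z, hadj, hz⟩ := Set.nonempty_of_ncard_ne_zero
    (s := (pathGraph m).neighborSet y ∩ Prod.mk x ⁻¹' S) (by omega)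
  exact ⟨z, hz, hadj⟩

-- a vertex outside `S` next to a full column already has `m` neighbours in `S`
lemma eq_univ_of_isOneK_of_forall_mem (hm : 3 ≤ m) {S : Set (Fin n × Fin m)}
    (hS : IsOneK ((pathGraph n).lexProd (pathGraph m)) 2 S) {x₀ : Fin n}
    (hx₀ : ∀ y, (x₀, y) ∈ S) : S = Set.univ := by
  by_contra hne
  obtain ⟨⟨x₁, y₁⟩, hp⟩ := (Set.ne_univ_iff_exists_notMem S).1 hne
  obtain ⟨x, hx, x', hx', hadj⟩ := (pathGraph_preconnected n).exists_adj_mem_not_mem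
    (s := {x | ∀ y, (x, y) ∈ S}) hx₀ (fun h => hp (h y₁))
  obtain ⟨y, hy⟩ := not_forall.1 hx'
  have hfull : colCount S x = m := by
    rw [colCount_coe, show Prod.mk x ⁻¹' S = Set.univ from Set.eq_univ_of_forall hx,
      Set.ncard_univ, Nat.card_eq_fintype_card, Fintype.card_fin]
  have := (hS _ hy).2
  rw [ncard_neighborSet_inter] at this
  rw [pathGraph_adj] at hadj
  rcases hadj with h | h
  · rw [show (x : ℤ) = x' - 1 by omega] at hfull; omega
  · rw [show (x : ℤ) = x' + 1 by omega] at hfull; omega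

lemma two_mul_div_four_le_ncard_of_isTotalOneK (hm : 2 ≤ m) {S : Set (Fin n × Fin m)}
    (hS : IsTotalOneK ((pathGraph n).lexProd (pathGraph m)) 2 S) :
    2 * ((n + 3) / 4) ≤ S.ncard := by
  have : Nontrivial (Fin m) := Fin.nontrivial_iff_two_le.2 hm
  rw [← sum_colCount]
  refine two_mul_div_four_le_sum (support_colCount S) (fun k hk => ?_)
    fun k h0 hn hpred hsucc => ?_
  · obtain ⟨⟨x, y₀⟩, hy₀, rfl⟩ := Set.nonempty_of_ncard_ne_zero hk
    obtain ⟨y₁, hadj⟩ := (pathGraph_preconnected m).exists_adj_of_nontrivial y₀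
    exact colCount_sub_one_add_colCount_add_one_le_one hy₀ hadj.symm (hS _).2
  · obtain ⟨x, rfl⟩ := exists_fin_coe_eq h0 hn
    rw [colCount_coe]
    exact (isTotalDomSet_preimage_of_colCount_eq_zero hS hpred hsucc).two_le_ncard

lemma div_three_le_ncard_of_isOneK (hm : 0 < m) {S : Set (Fin n × Fin m)}
    (hS : IsOneK ((pathGraph n).lexProd (pathGraph m)) 2 S) : (n + 2) / 3 ≤ S.ncard := by
  rw [← sum_colCount]
  refine div_three_le_sum (support_colCount S) fun k h0 hn => ?_
  obtain ⟨x, rfl⟩ := exists_fin_coe_eq h0 hn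
  exact colCount_sub_one_add_colCount_add_colCount_add_one_ne_zero hS x ⟨0, hm⟩

lemma two_mul_div_four_le_ncard_of_isOneK (hm : 4 ≤ m) {S : Set (Fin n × Fin m)}
    (hS : IsOneK ((pathGraph n).lexProd (pathGraph m)) 2 S) :
    2 * ((n + 3) / 4) ≤ S.ncard := by
  by_cases hfull : ∃ x₀ : Fin n, ∀ y, (x₀, y) ∈ S
  · obtain ⟨x₀, hx₀⟩ := hfull
    rw [eq_univ_of_isOneK_of_forall_mem (by omega) hS hx₀, Set.ncard_univ,
      Nat.card_eq_fintype_card, Fintype.card_prod, Fintype.card_fin, Fintype.card_fin]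
    have := Nat.mul_le_mul_left n hm
    omega
  push Not at hfull
  rw [← sum_colCount]
  refine two_mul_div_four_le_sum (support_colCount S) (fun k hk => ?_)
    fun k h0 hn hpred hsucc => ?_
  · obtain ⟨⟨x, y⟩, hy, rfl⟩ := Set.nonempty_of_ncard_ne_zero hk
    obtain ⟨y', hy'⟩ := hfull x
    obtain ⟨y₀, hy₀, y₁, hy₁, hadj⟩ := (pathGraph_preconnected m).exists_adj_mem_not_mem
      (s := Prod.mk x ⁻¹' S) hy hy'
    exact colCount_sub_one_add_colCount_add_one_le_one hy₀ hadj.symm (hS _ hy₁).2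
  · obtain ⟨x, rfl⟩ := exists_fin_coe_eq h0 hn
    rw [colCount_coe]
    exact two_le_ncard_of_isDomSet_pathGraph hm
      (isDomSet_preimage_of_colCount_eq_zero hS hpred hsucc)

def rowSet (C : ℤ → Prop) (y₀ : Fin m) : Set (Fin n × Fin m) := {p | C p.1 ∧ p.2 = y₀}

section RowSet

variable {C : ℤ → Prop} [DecidablePred C] (hC : ∀ k, C k → 0 ≤ k ∧ k < n)
include hC

lemma colCount_rowSet (y₀ : Fin m) (k : ℤ) :
    colCount (rowSet C y₀ : Set (Fin n × Fin m)) k = if C k then 1 else 0 := by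
  split_ifs with hk
  · obtain ⟨x, rfl⟩ := exists_fin_coe_eq (hC k hk).1 (hC k hk).2
    rw [colCount_coe, ← Set.ncard_singleton y₀]
    congr 1
    ext y
    simp [rowSet, hk]
  · rw [colCount, Set.ncard_eq_zero]
    ext ⟨x, y⟩
    simp only [rowSet, Set.mem_ofPred_eq, Set.mem_empty_iff_false, iff_false]
    rintro ⟨⟨hx, -⟩, rfl⟩
    exact hk hx

lemma ncard_rowSet (y₀ : Fin m) :
    (rowSet C y₀ : Set (Fin n × Fin m)).ncard = #{k ∈ Ico (0 : ℤ) n | C k} := by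
  rw [← sum_colCount, sum_congr rfl fun k _ => colCount_rowSet hC y₀ k, sum_boole, Nat.cast_id]

lemma isTotalOneK_rowSet (hdom : ∀ k : ℤ, 0 ≤ k → k < n → C (k - 1) ∨ C (k + 1))
    (hmatch : ∀ k, C k → ¬ (C (k - 1) ∧ C (k + 1))) (y₀ : Fin m) :
    IsTotalOneK ((pathGraph n).lexProd (pathGraph m)) 2 (rowSet C y₀) := by
  rintro ⟨x, y⟩
  have hin := Set.ncard_inter_le_ncard_right ((pathGraph m).neighborSet y)
    (Prod.mk x ⁻¹' (rowSet C y₀ : Set (Fin n × Fin m)))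
  rw [ncard_neighborSet_inter]
  rw [← colCount_coe] at hin
  simp only [colCount_rowSet hC] at hin ⊢
  have := hdom x (by omega) (by omega)
  have := hmatch x
  split_ifs at hin ⊢ <;> first | omega | tauto

lemma isOneK_rowSet (hm : 2 ≤ m) (hm3 : m ≤ 3)
    (hdom : ∀ k : ℤ, 0 ≤ k → k < n → ¬ C k → C (k - 1) ∨ C (k + 1))
    (hmatch : ∀ k, C k → ¬ (C (k - 1) ∧ C (k + 1))) :
    IsOneK ((pathGraph n).lexProd (pathGraph m)) 2 (rowSet C ⟨1, hm⟩) := by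
  rintro ⟨x, y⟩ hxy
  have hin := Set.ncard_inter_le_ncard_right ((pathGraph m).neighborSet y)
    (Prod.mk x ⁻¹' (rowSet C ⟨1, hm⟩ : Set (Fin n × Fin m)))
  rw [ncard_neighborSet_inter]
  rw [← colCount_coe] at hin
  simp only [colCount_rowSet hC] at hin ⊢
  by_cases hx : C x
  · -- in a path on at most three vertices the middle vertex `1` is adjacent to all others
    have hy : (y : ℕ) ≠ 1 := fun h => hxy ⟨hx, Fin.ext h⟩
    have hmid :
        1 ≤ ((pathGraph m).neighborSet y ∩ Prod.mk x ⁻¹' rowSet C ⟨1, hm⟩).ncard :=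
      Nat.one_le_iff_ne_zero.2 <| Set.ncard_ne_zero_of_mem (a := ⟨1, hm⟩)
        ⟨pathGraph_adj.2 (by have := y.isLt; dsimp only; omega), hx, rfl⟩
    have := hmatch x hx
    split_ifs at hin ⊢ <;> first | omega | tauto
  · have := hdom x (by omega) (by omega) hx
    split_ifs at hin ⊢ <;> first | omega | tauto

end RowSet

-- Pairs of adjacent columns separated by one or two empty columns, aligned with both ends.
def pairedColumns (n : ℕ) (k : ℤ) : Prop :=
  0 ≤ k ∧ k < n ∧
    ((n % 4 = 1 ∨ n % 4 = 2) ∧ (k % 4 = 0 ∨ k % 4 = 1 ∨ n % 4 = 1 ∧ k = n - 2) ∨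
      (n % 4 = 0 ∨ n % 4 = 3) ∧ (k % 4 = 1 ∨ k % 4 = 2))

def thirdColumns (n : ℕ) (k : ℤ) : Prop :=
  0 ≤ k ∧ k < n ∧ (k % 3 = 1 ∨ n % 3 = 1 ∧ k = n - 1)

lemma exists_isTotalOneK_ncard_eq (hn : 2 ≤ n) (hm : 0 < m) :
    ∃ S : Set (Fin n × Fin m), IsTotalOneK ((pathGraph n).lexProd (pathGraph m)) 2 S ∧
      S.ncard = 2 * ((n + 3) / 4) := by
  classical
  have hC : ∀ k, pairedColumns n k → 0 ≤ k ∧ k < n := fun k hk => ⟨hk.1, hk.2.1⟩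
  refine ⟨rowSet (pairedColumns n) ⟨0, hm⟩, isTotalOneK_rowSet hC
    (fun k _ _ => by unfold pairedColumns; omega) (fun k => by unfold pairedColumns; omega) _, ?_⟩
  rw [ncard_rowSet hC, card_filter_Ico_eq_of_succ (fun N => if n % 4 = 1 ∨ n % 4 = 2 then
      (N + 3) / 4 + (N + 2) / 4 + (if n % 4 = 1 ∧ n ≤ N + 1 then 1 else 0)
      else (N + 2) / 4 + (N + 1) / 4) (by split_ifs <;> omega)
    fun N hN => by unfold pairedColumns; split_ifs <;> omega]
  split_ifs <;> omega

lemma exists_isOneK_ncard_eq (hm : 2 ≤ m) (hm3 : m ≤ 3) :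
    ∃ S : Set (Fin n × Fin m), IsOneK ((pathGraph n).lexProd (pathGraph m)) 2 S ∧
      S.ncard = (n + 2) / 3 := by
  classical
  have hC : ∀ k, thirdColumns n k → 0 ≤ k ∧ k < n := fun k hk => ⟨hk.1, hk.2.1⟩
  refine ⟨rowSet (thirdColumns n) ⟨1, hm⟩, isOneK_rowSet hC hm hm3
    (fun k _ _ => by unfold thirdColumns; omega) (fun k => by unfold thirdColumns; omega), ?_⟩
  rw [ncard_rowSet hC, card_filter_Ico_eq_of_succ
    (fun N => (N + 1) / 3 + if n % 3 = 1 ∧ n ≤ N then 1 else 0) (by split_ifs <;> omega)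
    fun N hN => by unfold thirdColumns; split_ifs <;> omega]
  split_ifs <;> omega

end PathLexProduct

/-- For `n, m ≥ 2`, `γ_{t[1,2]}(P_n ∘ P_m) = 2⌈n/4⌉`; moreover
`γ_{[1,2]}(P_n ∘ P_m) = ⌈n/3⌉` for `m ∈ {2,3}` and `γ_{[1,2]}(P_n ∘ P_m) = 2⌈n/4⌉`
for `m > 3`. -/
theorem stmt19 (n m : ℕ) (hn : 2 ≤ n) (hm : 2 ≤ m) :
    gammaTotalOneK ((SimpleGraph.pathGraph n).lexProd (SimpleGraph.pathGraph m)) 2 =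
        2 * ((n + 3) / 4) ∧
    (m = 2 ∨ m = 3 →
      gammaOneK ((SimpleGraph.pathGraph n).lexProd (SimpleGraph.pathGraph m)) 2 =
        (n + 2) / 3) ∧
    (3 < m →
      gammaOneK ((SimpleGraph.pathGraph n).lexProd (SimpleGraph.pathGraph m)) 2 =
        2 * ((n + 3) / 4)) := by
  obtain ⟨S, hS, hcard⟩ := exists_isTotalOneK_ncard_eq (m := m) hn (by omega)
  refine ⟨sInf_ncard_eq ⟨S, hS, hcard⟩ fun T hT =>
    two_mul_div_four_le_ncard_of_isTotalOneK hm hT, fun hm3 => ?_, fun hm4 => ?_⟩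
  · exact sInf_ncard_eq (exists_isOneK_ncard_eq hm (by omega)) fun T hT =>
      div_three_le_ncard_of_isOneK (by omega) hT
  · exact sInf_ncard_eq ⟨S, hS.isOneK, hcard⟩ fun T hT =>
      two_mul_div_four_le_ncard_of_isOneK hm4 hT
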